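/- Consider the cone-constrained vector problem (P): C-minimize f(x) subject to g(x) ∈ −K, where f : X → ℝⁿ and g : X → ℝᵐ are defined on an open set X ⊆ ℝˢ, C ⊆ ℝⁿ and K ⊆ ℝᵐ are closed convex cones with vertex at the origin, and C has nonempty interior. Let S := {x ∈ X : g(x) ∈ −K}, let x̄ ∈ S be a weak local minimizer of (P), and define F(x) := max{λ·(f(x) − f(x̄)) + μ·g(x) : (λ,μ) ∈ Λ}, where Λ := {(λ,μ) : λ ∈ C*, μ ∈ K*, ‖λ‖² + ‖μ‖² = 1}. Then there exists a neighborhood N of x̄ such that F(x) ≥ F(x̄) = 0 for all x ∈ N. -/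

import Mathlib

/-!
A feasible `x` near `x̄` cannot satisfy `f x̄ - f x ∈ int C`, so separating `f x̄ - f x` from
`int C` gives `λ ∈ C* \ {0}` with `λ·(f x - f x̄) ≥ 0`; an infeasible `x` has `-g x ∉ K`, and
separating it from the closed cone `K` gives `μ ∈ K* \ {0}` with `μ·g x > 0`. Normalising
`(λ, 0)` or `(0, μ)` into `Λ` shows `F x ≥ 0`. At `x̄` every term of the maximum is
`μ·g x̄ ≤ 0`, so `F x̄ = 0`.
-/

open Filter Topology RealInnerProductSpace

/-- The positive polar (dual) cone `C* = {λ : λ·y ≥ 0 for all y ∈ C}`. -/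
def positivePolar {d : ℕ} (C : Set (EuclideanSpace ℝ (Fin d))) :
    Set (EuclideanSpace ℝ (Fin d)) :=
  {l | ∀ y ∈ C, 0 ≤ ⟪l, y⟫}

/-- The multiplier set `Λ = {(λ,μ) : λ ∈ C*, μ ∈ K*, ‖λ‖² + ‖μ‖² = 1}`. -/
def multiplierSet {n m : ℕ} (C : Set (EuclideanSpace ℝ (Fin n)))
    (K : Set (EuclideanSpace ℝ (Fin m))) :
    Set (EuclideanSpace ℝ (Fin n) × EuclideanSpace ℝ (Fin m)) :=
  {p | p.1 ∈ positivePolar C ∧ p.2 ∈ positivePolar K ∧ ‖p.1‖ ^ 2 + ‖p.2‖ ^ 2 = 1}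

/-- The scalarizing function
`F(x) = max{λ·(f(x) − f(x̄)) + μ·g(x) : (λ,μ) ∈ Λ}` (the maximum is attained since `Λ` is
a nonempty compact set; it is expressed here as a supremum). -/
noncomputable def Fscal {s n m : ℕ}
    (f : EuclideanSpace ℝ (Fin s) → EuclideanSpace ℝ (Fin n))
    (g : EuclideanSpace ℝ (Fin s) → EuclideanSpace ℝ (Fin m))
    (C : Set (EuclideanSpace ℝ (Fin n))) (K : Set (EuclideanSpace ℝ (Fin m)))
    (x₀ x : EuclideanSpace ℝ (Fin s)) : ℝ :=
  sSup ((fun p : EuclideanSpace ℝ (Fin n) × EuclideanSpace ℝ (Fin m) =>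
      ⟪p.1, f x - f x₀⟫ + ⟪p.2, g x⟫) '' multiplierSet C K)

open Set

section ConeSeparation

variable {E : Type*} [AddCommGroup E] [Module ℝ E] {D : Set E}

lemma nonneg_of_forall_le_of_smul_mem (hD : ∀ t : ℝ, 0 ≤ t → ∀ y ∈ D, t • y ∈ D)
    (φ : E →ₗ[ℝ] ℝ) {c : ℝ} (hc : ∀ y ∈ D, c ≤ φ y) {y : E} (hy : y ∈ D) : 0 ≤ φ y := by
  by_contra! hneg
  have ht : 0 ≤ (|c| + 1) / -φ y := div_nonneg (by positivity) (by linarith)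
  have hval : φ (((|c| + 1) / -φ y) • y) = -(|c| + 1) := by
    rw [map_smul, smul_eq_mul, div_mul_eq_mul_div, div_neg, mul_div_assoc, div_self hneg.ne,
      mul_one]
  linarith [hc _ (hD _ ht y hy), neg_abs_le c]

variable [TopologicalSpace E] [IsTopologicalAddGroup E] [ContinuousSMul ℝ E]

lemma exists_dual_nonneg_on_cone_of_notMem_interior (hconv : Convex ℝ D)
    (hD : ∀ t : ℝ, 0 ≤ t → ∀ y ∈ D, t • y ∈ D) (hint : (interior D).Nonempty) {a : E}
    (ha : a ∉ interior D) :
    ∃ φ : StrongDual ℝ E, φ ≠ 0 ∧ (∀ y ∈ D, 0 ≤ φ y) ∧ φ a ≤ 0 := by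
  obtain ⟨f, hf0, hf⟩ := geometric_hahn_banach_of_nonempty_interior_point hconv ha hint
  obtain ⟨c, hc⟩ := hint
  have h0 : (0 : E) ∈ D := by simpa using hD 0 le_rfl c (interior_subset hc)
  refine ⟨-f, neg_ne_zero.2 hf0, fun y hy ↦ ?_, by simpa using hf 0 h0⟩
  exact nonneg_of_forall_le_of_smul_mem hD (-f : StrongDual ℝ E).toLinearMap
    (c := -f a) (fun y hy ↦ by simpa using hf y hy) hy

variable [LocallyConvexSpace ℝ E]

lemma exists_dual_nonneg_on_cone_of_notMem (hclosed : IsClosed D) (hconv : Convex ℝ D)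
    (hD : ∀ t : ℝ, 0 ≤ t → ∀ y ∈ D, t • y ∈ D) (hne : D.Nonempty) {z : E} (hz : z ∉ D) :
    ∃ φ : StrongDual ℝ E, (∀ y ∈ D, 0 ≤ φ y) ∧ φ z < 0 := by
  obtain ⟨f, u, hf, hfz⟩ := geometric_hahn_banach_closed_point hconv hclosed hz
  obtain ⟨c, hc⟩ := hne
  have h0 : (0 : E) ∈ D := by simpa using hD 0 le_rfl c hc
  have hf0 := hf 0 h0
  rw [map_zero] at hf0
  refine ⟨-f, fun y hy ↦ ?_, by simp only [neg_apply]; linarith⟩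
  exact nonneg_of_forall_le_of_smul_mem hD (-f : StrongDual ℝ E).toLinearMap
    (c := -u) (fun y hy ↦ by simpa using (hf y hy).le) hy

end ConeSeparation

section PositivePolar

variable {d : ℕ} {D : Set (EuclideanSpace ℝ (Fin d))}

lemma toDual_symm_mem_positivePolar {φ : StrongDual ℝ (EuclideanSpace ℝ (Fin d))}
    (hφ : ∀ y ∈ D, 0 ≤ φ y) : (InnerProductSpace.toDual ℝ _).symm φ ∈ positivePolar D :=
  fun y hy ↦ by simpa only [InnerProductSpace.toDual_symm_apply] using hφ y hy

lemma zero_mem_positivePolar (D : Set (EuclideanSpace ℝ (Fin d))) : 0 ∈ positivePolar D :=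
  fun y _ ↦ by simp

lemma smul_mem_positivePolar {l : EuclideanSpace ℝ (Fin d)} (hl : l ∈ positivePolar D)
    {t : ℝ} (ht : 0 ≤ t) : t • l ∈ positivePolar D :=
  fun y hy ↦ by simpa only [real_inner_smul_left] using mul_nonneg ht (hl y hy)

lemma exists_ne_zero_mem_positivePolar_of_notMem_interior (hconv : Convex ℝ D)
    (hD : ∀ t : ℝ, 0 ≤ t → ∀ y ∈ D, t • y ∈ D) (hint : (interior D).Nonempty)
    {a : EuclideanSpace ℝ (Fin d)} (ha : a ∉ interior D) :
    ∃ l ≠ 0, l ∈ positivePolar D ∧ ⟪l, a⟫ ≤ 0 := by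
  obtain ⟨φ, hφ0, hφD, hφa⟩ := exists_dual_nonneg_on_cone_of_notMem_interior hconv hD hint ha
  refine ⟨_, by simpa using hφ0, toDual_symm_mem_positivePolar hφD, ?_⟩
  rwa [InnerProductSpace.toDual_symm_apply]

lemma exists_mem_positivePolar_of_notMem (hclosed : IsClosed D) (hconv : Convex ℝ D)
    (hD : ∀ t : ℝ, 0 ≤ t → ∀ y ∈ D, t • y ∈ D) (hne : D.Nonempty)
    {z : EuclideanSpace ℝ (Fin d)} (hz : z ∉ D) :
    ∃ l ∈ positivePolar D, ⟪l, z⟫ < 0 := by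
  obtain ⟨φ, hφD, hφz⟩ := exists_dual_nonneg_on_cone_of_notMem hclosed hconv hD hne hz
  exact ⟨_, toDual_symm_mem_positivePolar hφD, by rwa [InnerProductSpace.toDual_symm_apply]⟩

end PositivePolar

section Scalarization

variable {s n m : ℕ} {f : EuclideanSpace ℝ (Fin s) → EuclideanSpace ℝ (Fin n)}
  {g : EuclideanSpace ℝ (Fin s) → EuclideanSpace ℝ (Fin m)}
  {C : Set (EuclideanSpace ℝ (Fin n))} {K : Set (EuclideanSpace ℝ (Fin m))}
  {x₀ x : EuclideanSpace ℝ (Fin s)}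

lemma le_Fscal {p : EuclideanSpace ℝ (Fin n) × EuclideanSpace ℝ (Fin m)}
    (hp : p ∈ multiplierSet C K) :
    ⟪p.1, f x - f x₀⟫ + ⟪p.2, g x⟫ ≤ Fscal f g C K x₀ x := by
  refine le_csSup ⟨‖f x - f x₀‖ + ‖g x‖, ?_⟩ (mem_image_of_mem _ hp)
  rintro _ ⟨q, ⟨-, -, hq⟩, rfl⟩
  have h₁ : ‖q.1‖ ≤ 1 := (sq_le_one_iff₀ (norm_nonneg _)).1 (by nlinarith [sq_nonneg ‖q.2‖])
  have h₂ : ‖q.2‖ ≤ 1 := (sq_le_one_iff₀ (norm_nonneg _)).1 (by nlinarith [sq_nonneg ‖q.1‖])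
  exact add_le_add
    ((real_inner_le_norm _ _).trans (mul_le_of_le_one_left (norm_nonneg _) h₁))
    ((real_inner_le_norm _ _).trans (mul_le_of_le_one_left (norm_nonneg _) h₂))

lemma Fscal_self_nonpos (hx₀ : -g x₀ ∈ K) : Fscal f g C K x₀ x₀ ≤ 0 := by
  refine Real.sSup_le ?_ le_rfl
  rintro _ ⟨p, ⟨-, hp₂, -⟩, rfl⟩
  have hμ := hp₂ _ hx₀
  rw [inner_neg_right] at hμ
  simp only [sub_self, inner_zero_right, zero_add]
  linarith

lemma Fscal_nonneg_of_multiplier {l : EuclideanSpace ℝ (Fin n)} {μ : EuclideanSpace ℝ (Fin m)}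
    (hl : l ∈ positivePolar C) (hμ : μ ∈ positivePolar K) (hne : l ≠ 0 ∨ μ ≠ 0)
    (h : 0 ≤ ⟪l, f x - f x₀⟫ + ⟪μ, g x⟫) : 0 ≤ Fscal f g C K x₀ x := by
  have hpos : 0 < ‖l‖ ^ 2 + ‖μ‖ ^ 2 := by
    rcases hne with hne | hne
    · have := norm_pos_iff.2 hne; positivity
    · have := norm_pos_iff.2 hne; positivity
  set r := (√(‖l‖ ^ 2 + ‖μ‖ ^ 2))⁻¹ with hr
  have hr0 : 0 ≤ r := by positivity
  have hmem : (r • l, r • μ) ∈ multiplierSet C K := by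
    refine ⟨smul_mem_positivePolar hl hr0, smul_mem_positivePolar hμ hr0, ?_⟩
    rw [norm_smul, norm_smul, mul_pow, mul_pow, ← mul_add, Real.norm_of_nonneg hr0, hr, inv_pow,
      Real.sq_sqrt hpos.le, inv_mul_cancel₀ hpos.ne']
  refine le_trans ?_ (le_Fscal hmem)
  simp only [real_inner_smul_left, ← mul_add]
  exact mul_nonneg hr0 h

lemma Fscal_nonneg (hCconv : Convex ℝ C) (hCcone : ∀ t : ℝ, 0 ≤ t → ∀ y ∈ C, t • y ∈ C)
    (hCint : (interior C).Nonempty) (hKclosed : IsClosed K) (hKconv : Convex ℝ K)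
    (hKcone : ∀ t : ℝ, 0 ≤ t → ∀ y ∈ K, t • y ∈ K) (hKne : K.Nonempty)
    (hx : -g x ∈ K → f x₀ - f x ∉ interior C) : 0 ≤ Fscal f g C K x₀ x := by
  by_cases hgx : -g x ∈ K
  · obtain ⟨l, hl0, hlC, hla⟩ :=
      exists_ne_zero_mem_positivePolar_of_notMem_interior hCconv hCcone hCint (hx hgx)
    refine Fscal_nonneg_of_multiplier hlC (zero_mem_positivePolar K) (.inl hl0) ?_
    rw [← neg_sub, inner_neg_right, inner_zero_left, add_zero]
    linarith
  · obtain ⟨μ, hμK, hμg⟩ := exists_mem_positivePolar_of_notMem hKclosed hKconv hKcone hKne hgx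
    have hμ0 : μ ≠ 0 := by rintro rfl; simp at hμg
    refine Fscal_nonneg_of_multiplier (zero_mem_positivePolar C) hμK (.inr hμ0) ?_
    rw [inner_neg_right] at hμg
    rw [inner_zero_left, zero_add]
    linarith

end Scalarization

theorem weak_local_min_scalarization_general (s n m : ℕ)
    (X : Set (EuclideanSpace ℝ (Fin s))) (hX : IsOpen X)
    (f : EuclideanSpace ℝ (Fin s) → EuclideanSpace ℝ (Fin n))
    (g : EuclideanSpace ℝ (Fin s) → EuclideanSpace ℝ (Fin m))
    (C : Set (EuclideanSpace ℝ (Fin n))) (K : Set (EuclideanSpace ℝ (Fin m)))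
    (hCconv : Convex ℝ C)
    (hCcone : ∀ t : ℝ, 0 ≤ t → ∀ y ∈ C, t • y ∈ C)
    (hCint : (interior C).Nonempty)
    (hKclosed : IsClosed K) (hKconv : Convex ℝ K)
    (hKcone : ∀ t : ℝ, 0 ≤ t → ∀ y ∈ K, t • y ∈ K)
    (x₀ : EuclideanSpace ℝ (Fin s)) (hx₀X : x₀ ∈ X) (hx₀S : -g x₀ ∈ K)
    (hweak : ∃ N ∈ 𝓝 x₀, ∀ x ∈ N, x ∈ X → -g x ∈ K → f x₀ - f x ∉ interior C) :
    Fscal f g C K x₀ x₀ = 0 ∧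
      ∃ N ∈ 𝓝 x₀, ∀ x ∈ N, Fscal f g C K x₀ x₀ ≤ Fscal f g C K x₀ x := by
  obtain ⟨N, hN, hmin⟩ := hweak
  have hF : ∀ x ∈ N ∩ X, 0 ≤ Fscal f g C K x₀ x := fun x ⟨hxN, hxX⟩ ↦
    Fscal_nonneg hCconv hCcone hCint hKclosed hKconv hKcone ⟨_, hx₀S⟩ (hmin x hxN hxX)
  have hF₀ : Fscal f g C K x₀ x₀ = 0 :=
    (Fscal_self_nonpos hx₀S).antisymm (hF x₀ ⟨mem_of_mem_nhds hN, hx₀X⟩)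
  exact ⟨hF₀, N ∩ X, inter_mem hN (hX.mem_nhds hx₀X), fun x hx ↦ hF₀ ▸ hF x hx⟩

/-- If `x̄ ∈ S` is a weak local minimizer of the cone-constrained
vector problem (P), then `F(x̄) = 0` and there is a neighborhood `N` of `x̄` with
`F(x) ≥ F(x̄)` for all `x ∈ N`. -/
theorem weak_local_min_scalarization (s n m : ℕ)
    (X : Set (EuclideanSpace ℝ (Fin s))) (hX : IsOpen X)
    (f : EuclideanSpace ℝ (Fin s) → EuclideanSpace ℝ (Fin n))
    (g : EuclideanSpace ℝ (Fin s) → EuclideanSpace ℝ (Fin m))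
    (C : Set (EuclideanSpace ℝ (Fin n))) (K : Set (EuclideanSpace ℝ (Fin m)))
    (hCclosed : IsClosed C) (hCconv : Convex ℝ C)
    (hCcone : ∀ t : ℝ, 0 ≤ t → ∀ y ∈ C, t • y ∈ C)
    (hCint : (interior C).Nonempty)
    (hKclosed : IsClosed K) (hKconv : Convex ℝ K)
    (hKcone : ∀ t : ℝ, 0 ≤ t → ∀ y ∈ K, t • y ∈ K)
    (hΛ : (multiplierSet C K).Nonempty)
    (x₀ : EuclideanSpace ℝ (Fin s)) (hx₀X : x₀ ∈ X) (hx₀S : -g x₀ ∈ K)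
    (hweak : ∃ N ∈ 𝓝 x₀, ∀ x ∈ N, x ∈ X → -g x ∈ K → f x₀ - f x ∉ interior C) :
    Fscal f g C K x₀ x₀ = 0 ∧
      ∃ N ∈ 𝓝 x₀, ∀ x ∈ N, Fscal f g C K x₀ x₀ ≤ Fscal f g C K x₀ x :=
  weak_local_min_scalarization_general s n m X hX f g C K hCconv hCcone hCint hKclosed hKconv hKcone
    x₀ hx₀X hx₀S hweak
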